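/- arXiv:1809.02284 — 4 statements merged into one kernel-verified Lean document; each statement's English description precedes it below -/
import Mathlib

section
/- Let X be a compact metric space and f : X → X a homeomorphism whose non-wandering set is all of X. Then the set of recurrent points of f (points x such that x is a limit of f^{n_k}(x) for some sequence n_k → ∞) is dense in X. -/
/-!
The points `x` with `inf_{n ≥ 1} dist (f^[n] x) x = 0` form a countable intersection of open
sets `{x | ∃ n ≥ 1, dist (f^[n] x) x < ε}`, each of which is dense because every point is
non-wandering; by Baire's theorem this intersection is dense. Each of its points is recurrent:
a periodic point trivially, and otherwise the orbit points `f^[1] x, …, f^[N] x` stay at a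
positive distance from `x`, so the returns close to `x` happen at times beyond `N`.
-/

open Filter Topology

namespace Function

variable {X : Type*}

theorem mapClusterPt_iterate_of_forall_mem_nhds [TopologicalSpace X] [T1Space X]
    {f : X → X} {x : X} (hx : ∀ U ∈ 𝓝 x, ∃ n, f^[n + 1] x ∈ U) :
    MapClusterPt x atTop (fun n => f^[n] x) := by
  refine mapClusterPt_iff_frequently.2 fun U hU => frequently_atTop.2 fun N => ?_
  by_cases hper : ∃ p, IsPeriodicPt f (p + 1) x
  · obtain ⟨p, hp⟩ := hper
    refine ⟨(p + 1) * N, Nat.le_mul_of_pos_left N p.succ_pos, ?_⟩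
    rw [(hp.mul_const N).eq]
    exact mem_of_mem_nhds hU
  · push Not at hper
    set early : Set X := (fun m => f^[m + 1] x) '' Set.Iio N
    have hx_early : x ∉ early := fun ⟨m, _, hm⟩ => hper m hm
    have h_early_closed : IsClosed early := ((Set.finite_Iio N).image _).isClosed
    obtain ⟨n, hnU, hn_early⟩ := hx _ (inter_mem hU (h_early_closed.compl_mem_nhds hx_early))
    refine ⟨n + 1, ?_, hnU⟩
    by_contra! hn
    exact hn_early ⟨n, Set.mem_Iio.2 (by omega), rfl⟩

theorem exists_strictMono_one_le_tendsto_of_mapClusterPt [TopologicalSpace X]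
    [FirstCountableTopology X] {u : ℕ → X} {x : X} (hx : MapClusterPt x atTop u) :
    ∃ φ : ℕ → ℕ, StrictMono φ ∧ (∀ k, 1 ≤ φ k) ∧ Tendsto (fun k => u (φ k)) atTop (𝓝 x) := by
  obtain ⟨ψ, hψ, hlim⟩ := hx.tendsto_subseq
  refine ⟨fun k => ψ (k + 1), hψ.comp (strictMono_id.add_const 1),
    fun k => (Nat.zero_le _).trans_lt (hψ k.succ_pos), ?_⟩
  exact hlim.comp (tendsto_add_atTop_nat 1)

def IsNonWanderingPt [TopologicalSpace X] (f : X → X) (x : X) : Prop :=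
  ∀ U : Set X, IsOpen U → x ∈ U → ∃ n : ℕ, 1 ≤ n ∧ (f^[n] '' U ∩ U).Nonempty

section Metric

variable [MetricSpace X] {f : X → X}

theorem isOpen_setOf_exists_dist_iterate_lt (hf : Continuous f) (ε : ℝ) :
    IsOpen {x | ∃ n, dist (f^[n + 1] x) x < ε} := by
  simp_rw [Set.ofPred_exists]
  exact isOpen_iUnion fun n => isOpen_lt ((hf.iterate _).dist continuous_id) continuous_const

theorem dense_setOf_exists_dist_iterate_lt (hnw : ∀ x, IsNonWanderingPt f x) {ε : ℝ}
    (hε : 0 < ε) : Dense {x | ∃ n, dist (f^[n + 1] x) x < ε} := by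
  refine dense_iff_inter_open.2 fun V hV ⟨x, hxV⟩ => ?_
  obtain ⟨r, hr, hrV⟩ := Metric.isOpen_iff.1 hV x hxV
  set δ := min r (ε / 2)
  have hδ : 0 < δ := lt_min hr (half_pos hε)
  obtain ⟨n, hn, _, ⟨w, hw, rfl⟩, hfw⟩ :=
    hnw x _ Metric.isOpen_ball (Metric.mem_ball_self hδ)
  obtain ⟨m, rfl⟩ := Nat.exists_eq_add_of_le' hn
  refine ⟨w, hrV (Metric.ball_subset_ball (min_le_left _ _) hw), m, ?_⟩
  calc dist (f^[m + 1] w) w ≤ dist (f^[m + 1] w) x + dist w x := dist_triangle_right _ _ _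
    _ < δ + δ := add_lt_add hfw hw
    _ ≤ ε / 2 + ε / 2 := by gcongr <;> exact min_le_right _ _
    _ = ε := add_halves ε

theorem forall_mem_nhds_iterate_of_forall_exists_dist_lt {x : X}
    (hx : ∀ k : ℕ, ∃ n, dist (f^[n + 1] x) x < 1 / (k + 1)) :
    ∀ U ∈ 𝓝 x, ∃ n, f^[n + 1] x ∈ U := by
  intro U hU
  obtain ⟨ε, hε, hεU⟩ := Metric.mem_nhds_iff.1 hU
  obtain ⟨k, hk⟩ := exists_nat_one_div_lt hε
  obtain ⟨n, hn⟩ := hx k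
  exact ⟨n, hεU (hn.trans hk)⟩

end Metric

end Function

open Function in
/-- If every point of a compact metric space is non-wandering for a homeomorphism `f`,
then the set of recurrent points of `f` is dense. -/
theorem recurrent_points_dense_of_nonwandering
    {X : Type*} [MetricSpace X] [CompactSpace X] (f : X ≃ₜ X)
    (hnw : ∀ x : X, ∀ U : Set X, IsOpen U → x ∈ U →
      ∃ n : ℕ, 1 ≤ n ∧ ((⇑f)^[n] '' U ∩ U).Nonempty) :
    Dense {x : X | ∃ φ : ℕ → ℕ, StrictMono φ ∧ (∀ k, 1 ≤ φ k) ∧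
      Tendsto (fun k => (⇑f)^[φ k] x) atTop (𝓝 x)} := by
  have hdense : Dense (⋂ k : ℕ, {x | ∃ n, dist ((⇑f)^[n + 1] x) x < 1 / (k + 1)}) :=
    dense_iInter_of_isOpen (fun _ => isOpen_setOf_exists_dist_iterate_lt f.continuous _)
      (fun _ => dense_setOf_exists_dist_iterate_lt hnw Nat.one_div_pos_of_nat)
  refine hdense.mono fun x hx => ?_
  exact exists_strictMono_one_le_tendsto_of_mapClusterPt <|
    mapClusterPt_iterate_of_forall_mem_nhds <|
      forall_mem_nhds_iterate_of_forall_exists_dist_lt (Set.mem_iInter.1 hx)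
end

section
/- Let X be a compact metric space and f : X → X a homeomorphism. If every point of X is non-wandering for f, then for every integer k ≥ 1, every point of X is non-wandering for f^k. -/
/-!
Repeatedly shrinking a nonempty open set `U` to the nonempty open set `U ∩ f⁻ⁿ U` produces, for
every `N`, a point of `U` that visits `U` at `N` distinct times. Two of `k + 1` such times `a < b`
are congruent mod `k`, and then the visit `f^a y ∈ U` returns to `U` under `(f^k)^((b - a)/k)`.
-/

open Function Finset

def IsNonwanderingPt {X : Type*} [TopologicalSpace X] (f : X → X) (x : X) : Prop :=
  ∀ U : Set X, IsOpen U → x ∈ U → ∃ n : ℕ, 1 ≤ n ∧ (f^[n] '' U ∩ U).Nonempty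

theorem Nat.exists_lt_modEq_of_lt_card {S : Finset ℕ} {k : ℕ} (hk : 0 < k) (hS : k < #S) :
    ∃ a ∈ S, ∃ b ∈ S, a < b ∧ a ≡ b [MOD k] := by
  obtain ⟨a, ha, b, hb, hne, hmod⟩ := exists_ne_map_eq_of_card_lt_of_maps_to
    (t := range k) (by simpa using hS) fun t _ => mem_range.2 (Nat.mod_lt t hk)
  rcases hne.lt_or_gt with hab | hba
  · exact ⟨a, ha, b, hb, hab, hmod⟩
  · exact ⟨b, hb, a, ha, hba, hmod.symm⟩

theorem exists_image_iterate_iterate_inter_nonempty_of_modEq {X : Type*} {f : X → X}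
    {U : Set X} {y : X} {k a b : ℕ}
    (ha : f^[a] y ∈ U) (hb : f^[b] y ∈ U) (hab : a < b) (hmod : a ≡ b [MOD k]) :
    ∃ n, 1 ≤ n ∧ ((f^[k])^[n] '' U ∩ U).Nonempty := by
  obtain ⟨n, hn⟩ := (Nat.modEq_iff_dvd' hab.le).1 hmod
  refine ⟨n, Nat.pos_of_ne_zero ?_, _, ⟨f^[a] y, ha, rfl⟩, ?_⟩
  · rintro rfl
    omega
  · rwa [← iterate_mul, ← hn, ← iterate_add_apply, Nat.sub_add_cancel hab.le]

section

variable {X : Type*} [TopologicalSpace X] {f : X → X}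

theorem exists_inter_preimage_iterate_nonempty (hf : ∀ x, IsNonwanderingPt f x) {U : Set X}
    (hU : IsOpen U) (hne : U.Nonempty) : ∃ n, 1 ≤ n ∧ (U ∩ f^[n] ⁻¹' U).Nonempty := by
  obtain ⟨x, hx⟩ := hne
  obtain ⟨n, hn, _, ⟨y, hy, rfl⟩, hfy⟩ := hf x U hU hx
  exact ⟨n, hn, y, hy, hfy⟩

theorem exists_card_eq_forall_iterate_mem (hc : Continuous f) (hf : ∀ x, IsNonwanderingPt f x)
    (N : ℕ) {U : Set X} (hU : IsOpen U) (hne : U.Nonempty) :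
    ∃ y ∈ U, ∃ S : Finset ℕ, #S = N ∧ ∀ t ∈ S, f^[t] y ∈ U := by
  induction N generalizing U with
  | zero =>
    obtain ⟨y, hy⟩ := hne
    exact ⟨y, hy, ∅, rfl, by simp⟩
  | succ N ih =>
    obtain ⟨n, hn, hVne⟩ := exists_inter_preimage_iterate_nonempty hf hU hne
    obtain ⟨y, ⟨hyU, -⟩, S, hS, hSV⟩ :=
      ih (hU.inter ((hc.iterate n).isOpen_preimage U hU)) hVne
    have h0 : 0 ∉ S.map (addLeftEmbedding n) := by simp [Nat.one_le_iff_ne_zero.1 hn]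
    refine ⟨y, hyU, insert 0 (S.map (addLeftEmbedding n)), by simp [h0, hS], ?_⟩
    simp only [mem_insert, mem_map, addLeftEmbedding_apply]
    rintro _ (rfl | ⟨t, ht, rfl⟩)
    · exact hyU
    · rw [iterate_add_apply]
      exact (hSV t ht).2

theorem IsNonwanderingPt.iterate_of_forall (hc : Continuous f) (hf : ∀ x, IsNonwanderingPt f x)
    {k : ℕ} (hk : 0 < k) (x : X) : IsNonwanderingPt f^[k] x := by
  intro U hU hx
  obtain ⟨y, -, S, hS, hSU⟩ := exists_card_eq_forall_iterate_mem hc hf (k + 1) hU ⟨x, hx⟩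
  obtain ⟨a, ha, b, hb, hab, hmod⟩ := Nat.exists_lt_modEq_of_lt_card (S := S) hk (by omega)
  exact exists_image_iterate_iterate_inter_nonempty_of_modEq (hSU a ha) (hSU b hb) hab hmod

end

theorem nonwandering_of_iterate_general
    {X : Type*} [MetricSpace X] (f : X ≃ₜ X)
    (hnw : ∀ x : X, ∀ U : Set X, IsOpen U → x ∈ U →
      ∃ n : ℕ, 1 ≤ n ∧ ((⇑f)^[n] '' U ∩ U).Nonempty) :
    ∀ k : ℕ, 1 ≤ k → ∀ x : X, ∀ U : Set X, IsOpen U → x ∈ U →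
      ∃ n : ℕ, 1 ≤ n ∧ (((⇑f)^[k])^[n] '' U ∩ U).Nonempty :=
  fun _ hk => IsNonwanderingPt.iterate_of_forall f.continuous hnw hk

/-- If every point of a compact metric space is non-wandering for a homeomorphism `f`,
then for every `k ≥ 1`, every point is non-wandering for `f^k`. -/
theorem nonwandering_of_iterate
    {X : Type*} [MetricSpace X] [CompactSpace X] (f : X ≃ₜ X)
    (hnw : ∀ x : X, ∀ U : Set X, IsOpen U → x ∈ U →
      ∃ n : ℕ, 1 ≤ n ∧ ((⇑f)^[n] '' U ∩ U).Nonempty) :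
    ∀ k : ℕ, 1 ≤ k → ∀ x : X, ∀ U : Set X, IsOpen U → x ∈ U →
      ∃ n : ℕ, 1 ≤ n ∧ (((⇑f)^[k])^[n] '' U ∩ U).Nonempty :=
  nonwandering_of_iterate_general f hnw
end

section
/- Let g : X → X be a homeomorphism of a topological space, V a finite group acting on X by homeomorphisms that commute with g, and x ∈ X a point such that for every γ ∈ V there exists β ∈ V with β·x in the omega-limit set of γ·x under g. Assume moreover that the assignment γ ↦ β defines a map η : V → V which is a bijection. Then x is non-wandering for g, i.e., for every open neighborhood U of x there exists m ≥ 1 with g^m(U) ∩ U ≠ ∅. -/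
/-!
Each point `pᵢ₊₁ = ηⁱ⁺¹(1) • x` is an ω-limit point of `pᵢ = ηⁱ(1) • x`. Since `η` is a
permutation of a finite set, `ηᵏ(1) = 1` for some `k ≥ 1`, so this chain closes up at
`pₖ = p₀ = x`. An ω-limit set is closed and forward invariant, hence contains the ω-limit set of
each of its points; so ω-limit points are transitive along the chain and `x` lies in its own
ω-limit set. A recurrent point is non-wandering.
-/

open Filter Topology Set Function
open scoped omegaLimit

section omegaLimit

variable {τ α β : Type*} [TopologicalSpace β] {f : Filter τ} {ϕ : τ → α → β}

theorem mem_omegaLimit_singleton_of_tendsto_comp {ι : Type*} {l : Filter ι} [NeBot l]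
    {φ : ι → τ} {x : α} {y : β} (hφ : Tendsto φ l f)
    (h : Tendsto (fun j ↦ ϕ (φ j) x) l (𝓝 y)) : y ∈ ω f ϕ {x} :=
  (mem_omegaLimit_singleton_iff_mapClusterPt f ϕ x y).2 (h.mapClusterPt.of_comp hφ)

theorem exists_image_inter_nonempty_of_mem_omegaLimit_self [SemilatticeSup τ] [Nonempty τ]
    {ϕ : τ → β → β} {x : β} (hx : x ∈ ω⁺ ϕ {x}) {U : Set β} (hU : U ∈ 𝓝 x) (t₀ : τ) :
    ∃ t ≥ t₀, (ϕ t '' U ∩ U).Nonempty := by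
  rw [mem_omegaLimit_singleton_iff_mapClusterPt, mapClusterPt_iff_frequently] at hx
  obtain ⟨t, ht, hxU⟩ := frequently_atTop.1 (hx U hU) t₀
  exact ⟨t, ht, ϕ t x, mem_image_of_mem _ (mem_of_mem_nhds hU), hxU⟩

end omegaLimit

namespace Flow

variable {τ : Type*} [TopologicalSpace τ] [AddMonoid τ] {α : Type*} [TopologicalSpace α]
  {f : Filter τ} (ϕ : Flow τ α)

/-- Unlike `Flow.omegaLimit_omegaLimit`, this does not need `τ` to be a group. -/
theorem omegaLimit_omegaLimit_of_addMonoid (hf : ∀ t, Tendsto (t + ·) f f) (s : Set α) :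
    ω f ϕ (ω f ϕ s) ⊆ ω f ϕ s := by
  have hinv : image2 ϕ univ (ω f ϕ s) ⊆ ω f ϕ s := by
    rintro _ ⟨t, -, y, hy, rfl⟩
    exact isInvariant_omegaLimit f ϕ s hf t hy
  calc ω f ϕ (ω f ϕ s)
      ⊆ closure (image2 ϕ univ (ω f ϕ s)) := omegaLimit_subset_closure_image2 f ϕ _ univ_mem
    _ ⊆ ω f ϕ s := closure_minimal hinv (isClosed_omegaLimit f ϕ s)

theorem mem_omegaLimit_of_chain (hf : ∀ t, Tendsto (t + ·) f f) {p : ℕ → α}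
    (hp : ∀ i, p (i + 1) ∈ ω f ϕ {p i}) {k : ℕ} (hk : 0 < k) : p k ∈ ω f ϕ {p 0} := by
  induction k, hk using Nat.le_induction with
  | base => exact hp 0
  | succ k _ ih =>
    exact ϕ.omegaLimit_omegaLimit_of_addMonoid hf _
      (omegaLimit_mono_right f ϕ (singleton_subset_iff.2 ih) (hp k))

end Flow

theorem nonwandering_of_finite_group_omega_limit_general
    {X : Type*} [MetricSpace X] (g : X ≃ₜ X)
    (V : Type*) [Group V] [Finite V] [MulAction V X]
    (x : X) (η : V → V) (hη : Function.Bijective η)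
    (hω : ∀ γ : V, ∃ φ : ℕ → ℕ, StrictMono φ ∧
      Tendsto (fun j => (⇑g)^[φ j] (γ • x)) atTop (𝓝 (η γ • x))) :
    ∀ U : Set X, IsOpen U → x ∈ U →
      ∃ m : ℕ, 1 ≤ m ∧ ((⇑g)^[m] '' U ∩ U).Nonempty := by
  intro U hU hxU
  set ϕ := Flow.fromIter g.continuous
  have hshift : ∀ t : ℕ, Tendsto (t + ·) atTop atTop := fun t ↦
    tendsto_atTop_mono (Nat.le_add_left · t) tendsto_id
  obtain ⟨k, hk, hperiod⟩ := mem_periodicPts.1 (hη.injective.mem_periodicPts 1)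
  have hchain : ∀ i, η^[i + 1] 1 • x ∈ ω⁺ ϕ {η^[i] 1 • x} := fun i ↦ by
    obtain ⟨φ, hφ, hlim⟩ := hω (η^[i] 1)
    rw [iterate_succ_apply']
    exact mem_omegaLimit_singleton_of_tendsto_comp hφ.tendsto_atTop hlim
  have hrec : x ∈ ω⁺ ϕ {x} := by
    simpa only [hperiod.eq, iterate_zero_apply, one_smul] using
      ϕ.mem_omegaLimit_of_chain hshift hchain hk
  exact exists_image_inter_nonempty_of_mem_omegaLimit_self hrec (hU.mem_nhds hxU) 1

/-- If a finite group `V` acts on a metric space `X` by homeomorphisms commuting with a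
homeomorphism `g`, `x` is a point such that the map `η : V → V` is a bijection and for every
`γ ∈ V` the point `η γ • x` lies in the omega-limit set of `γ • x` under `g`, then `x` is
non-wandering for `g`. -/
theorem nonwandering_of_finite_group_omega_limit
    {X : Type*} [MetricSpace X] (g : X ≃ₜ X)
    (V : Type*) [Group V] [Finite V] [MulAction V X]
    (hcont : ∀ γ : V, Continuous (fun y : X => γ • y))
    (hcomm : ∀ (γ : V) (y : X), g (γ • y) = γ • g y)
    (x : X) (η : V → V) (hη : Function.Bijective η)
    (hω : ∀ γ : V, ∃ φ : ℕ → ℕ, StrictMono φ ∧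
      Tendsto (fun j => (⇑g)^[φ j] (γ • x)) atTop (𝓝 (η γ • x))) :
    ∀ U : Set X, IsOpen U → x ∈ U →
      ∃ m : ℕ, 1 ≤ m ∧ ((⇑g)^[m] '' U ∩ U).Nonempty :=
  nonwandering_of_finite_group_omega_limit_general g V x η hη hω
end

section
/- Hölder's theorem: a group acting freely on the real line by order-preserving bijections is abelian. Precisely, if G is a group and ρ : G → (order-preserving bijections of ℝ) is a group homomorphism such that for every g ≠ 1 in G the map ρ(g) has no fixed point, then G is abelian. -/
/-!
A homeomorphism of `ℝ` without fixed points moves every point in the same direction, so for a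
free action the relative position of `ρ a x` and `ρ b x` does not depend on `x`. Comparing the
orbit of `0` therefore orders `G` by a linear order invariant under multiplication on both sides,
and it is archimedean because the iterates of a fixed-point-free homeomorphism escape to infinity.
In an archimedean bi-ordered group every commutator lies below `ε * ε` for every `ε > 1`: write
`a` and `b` between consecutive powers of `ε`. A positive commutator `c` is then either the least
positive element, in which case `G` is generated by `c` and is abelian, or it admits some
`ε > 1` with `ε * ε ≤ c`; both are absurd.
-/

open Function
open scoped commutatorElement

section FixedPointFree

variable {α : Type*} [TopologicalSpace α]

theorem Continuous.apply_lt_self_of_apply_lt_self [LinearOrder α] [OrderClosedTopology α]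
    [PreconnectedSpace α] {f : α → α} (hf : Continuous f) (hfix : ∀ y, f y ≠ y) {x : α}
    (hx : f x < x) (y : α) : f y < y := by
  by_contra hy
  obtain ⟨z, hz⟩ := intermediate_value_univ₂ hf continuous_id hx.le (not_lt.1 hy)
  exact hfix z hz

theorem Continuous.exists_le_iterate [ConditionallyCompleteLinearOrder α] [OrderTopology α]
    {f : α → α} (hf : Continuous f) (hlt : ∀ x, x < f x) (x y : α) : ∃ n, y ≤ f^[n] x := by
  by_contra! hbdd
  have hmono : Monotone fun n => f^[n] x := monotone_nat_of_le_succ fun n => by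
    rw [iterate_succ_apply']
    exact (hlt _).le
  have hfixed := isFixedPt_of_tendsto_iterate
    (tendsto_atTop_ciSup hmono ⟨y, by rintro _ ⟨n, rfl⟩; exact (hbdd n).le⟩) hf.continuousAt
  exact (hlt _).ne' hfixed

end FixedPointFree

section ArchimedeanBiorderedGroup

variable {G : Type*} [Group G] [LinearOrder G] [MulLeftMono G] [MulRightMono G]

theorem exists_one_lt_mul_self_le {c δ : G} (hδ : 1 < δ) (hδc : δ < c) :
    ∃ ε, 1 < ε ∧ ε * ε ≤ c := by
  by_cases h : δ * δ ≤ c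
  · exact ⟨δ, hδ, h⟩
  refine ⟨δ⁻¹ * c, lt_inv_mul_iff_mul_lt.2 (by simpa using hδc), ?_⟩
  have hlt : δ⁻¹ * c < δ := inv_mul_lt_iff_lt_mul.2 (not_le.1 h)
  simpa using mul_le_mul_left hlt.le (δ⁻¹ * c)

variable (harch : ∀ (a : G) {ε : G}, 1 < ε → ∃ n : ℕ, a ≤ ε ^ n)
include harch

theorem exists_zpow_le_and_lt_zpow_add_one {ε : G} (hε : 1 < ε) (a : G) :
    ∃ m : ℤ, ε ^ m ≤ a ∧ a < ε ^ (m + 1) := by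
  have hmono : StrictMono fun k : ℤ => ε ^ k := strictMono_int_of_lt_succ fun k => by
    rw [zpow_add_one]
    exact lt_mul_of_one_lt_right' _ hε
  have hbdd : ∃ b : ℤ, ∀ k, ε ^ k ≤ a → k ≤ b := by
    obtain ⟨n, hn⟩ := harch a hε
    exact ⟨n, fun k hk => hmono.le_iff_le.1 (hk.trans (by rwa [zpow_natCast]))⟩
  have hne : ∃ k : ℤ, ε ^ k ≤ a := by
    obtain ⟨n, hn⟩ := harch a⁻¹ hε
    exact ⟨-n, by simpa [zpow_neg] using inv_le_of_inv_le' hn⟩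
  obtain ⟨m, hm, hmax⟩ := Int.exists_greatest_of_bdd hbdd hne
  exact ⟨m, hm, lt_of_not_ge fun h => (hmax _ h).not_gt (lt_add_one m)⟩

theorem exists_zpow_eq_of_forall_one_lt_le {c : G} (hc : 1 < c)
    (hmin : ∀ δ, 1 < δ → c ≤ δ) (g : G) : ∃ m : ℤ, c ^ m = g := by
  obtain ⟨m, hle, hlt⟩ := exists_zpow_le_and_lt_zpow_add_one harch hc g
  refine ⟨m, le_antisymm hle (not_lt.1 fun hgt => ?_)⟩
  have hpos : 1 < (c ^ m)⁻¹ * g := lt_inv_mul_iff_mul_lt.2 (by simpa using hgt)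
  have hsmall : (c ^ m)⁻¹ * g < c := inv_mul_lt_iff_lt_mul.2 (by rwa [← zpow_add_one])
  exact (hmin _ hpos).not_gt hsmall

theorem commutatorElement_lt_mul_self {ε : G} (hε : 1 < ε) (a b : G) : ⁅a, b⁆ < ε * ε := by
  obtain ⟨m, ham, ha⟩ := exists_zpow_le_and_lt_zpow_add_one harch hε a
  obtain ⟨n, hbn, hb⟩ := exists_zpow_le_and_lt_zpow_add_one harch hε b
  have hab : a * b < ε ^ (m + n + 2) := by
    calc a * b < ε ^ (m + 1) * ε ^ (n + 1) := mul_lt_mul_of_lt_of_le ha hb.le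
      _ = ε ^ (m + n + 2) := by rw [← zpow_add]; ring_nf
  have hba : (b * a)⁻¹ ≤ ε ^ (-(m + n)) := by
    rw [zpow_neg, inv_le_inv_iff, add_comm, zpow_add]
    exact mul_le_mul' hbn ham
  calc ⁅a, b⁆ = a * b * (b * a)⁻¹ := by group
    _ < ε ^ (m + n + 2) * ε ^ (-(m + n)) := mul_lt_mul_of_lt_of_le hab hba
    _ = ε * ε := by rw [← zpow_add, show m + n + 2 + -(m + n) = 2 by ring, zpow_two]

theorem commutatorElement_le_one (a b : G) : ⁅a, b⁆ ≤ 1 := by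
  by_contra! hc
  by_cases hδ : ∃ δ, 1 < δ ∧ δ < ⁅a, b⁆
  · obtain ⟨δ, hδ, hδc⟩ := hδ
    obtain ⟨ε, hε, hεc⟩ := exists_one_lt_mul_self_le hδ hδc
    exact (commutatorElement_lt_mul_self harch hε a b).not_ge hεc
  push Not at hδ
  obtain ⟨p, hp⟩ := exists_zpow_eq_of_forall_one_lt_le harch hc hδ a
  obtain ⟨q, hq⟩ := exists_zpow_eq_of_forall_one_lt_le harch hc hδ b
  have hcomm := (Commute.zpow_zpow_self ⁅a, b⁆ p q).eq
  rw [hp, hq] at hcomm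
  exact hc.ne' (commutatorElement_eq_one_iff_mul_comm.2 hcomm)

theorem mul_comm_of_archimedean (a b : G) : a * b = b * a := by
  refine commutatorElement_eq_one_iff_mul_comm.1 (le_antisymm (commutatorElement_le_one harch a b)
    (inv_le_one'.1 ?_))
  rw [commutatorElement_inv]
  exact commutatorElement_le_one harch b a

end ArchimedeanBiorderedGroup

section FreeAction

variable {G : Type*} [Group G] {ρ : G →* Equiv.Perm ℝ}

theorem injective_apply_zero_of_free (hfree : ∀ g : G, g ≠ 1 → ∀ x : ℝ, ρ g x ≠ x) :
    Injective fun g => ρ g 0 := by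
  intro a b h
  by_contra hne
  refine hfree (b⁻¹ * a) (by rwa [Ne, inv_mul_eq_one, eq_comm]) 0 ?_
  simpa using congrArg (ρ b).symm h

theorem apply_lt_apply_of_apply_lt (hmono : ∀ g : G, StrictMono (ρ g))
    (hfree : ∀ g : G, g ≠ 1 → ∀ x : ℝ, ρ g x ≠ x) {a b : G} {x : ℝ} (h : ρ a x < ρ b x) (y : ℝ) :
    ρ a y < ρ b y := by
  have hne : b⁻¹ * a ≠ 1 := by
    rw [Ne, inv_mul_eq_one]
    rintro rfl
    exact h.false
  have hcont : Continuous (ρ (b⁻¹ * a)) :=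
    (hmono _).monotone.continuous_of_surjective (ρ _).surjective
  have hx : ρ (b⁻¹ * a) x < x := by simpa using hmono b⁻¹ h
  simpa using hmono b (hcont.apply_lt_self_of_apply_lt_self (hfree _ hne) hx y)

theorem apply_le_apply_of_apply_le (hmono : ∀ g : G, StrictMono (ρ g))
    (hfree : ∀ g : G, g ≠ 1 → ∀ x : ℝ, ρ g x ≠ x) {a b : G} {x : ℝ} (h : ρ a x ≤ ρ b x) (y : ℝ) :
    ρ a y ≤ ρ b y :=
  not_lt.1 fun h' => (apply_lt_apply_of_apply_lt hmono hfree h' x).not_ge h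

end FreeAction

/-- Hölder's theorem: a group acting freely on the real line by order-preserving
bijections is abelian. -/
theorem holder_abelian_of_free_action
    {G : Type*} [Group G] (ρ : G →* Equiv.Perm ℝ)
    (hmono : ∀ g : G, StrictMono (ρ g))
    (hfree : ∀ g : G, g ≠ 1 → ∀ x : ℝ, ρ g x ≠ x) :
    ∀ a b : G, a * b = b * a := by
  let _ : LinearOrder G := LinearOrder.lift' (fun g => ρ g 0) (injective_apply_zero_of_free hfree)
  have : MulLeftMono G := ⟨fun c a b (h : ρ a 0 ≤ ρ b 0) =>
    show ρ (c * a) 0 ≤ ρ (c * b) 0 by simpa using (hmono c).monotone h⟩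
  have : MulRightMono G := ⟨fun c a b (h : ρ a 0 ≤ ρ b 0) =>
    show ρ (a * c) 0 ≤ ρ (b * c) 0 by simpa using apply_le_apply_of_apply_le hmono hfree h (ρ c 0)⟩
  refine mul_comm_of_archimedean fun a ε (hε : ρ 1 0 < ρ ε 0) => ?_
  have hcont : Continuous (ρ ε) := (hmono ε).monotone.continuous_of_surjective (ρ ε).surjective
  obtain ⟨n, hn⟩ := hcont.exists_le_iterate
    (fun y => by simpa using apply_lt_apply_of_apply_lt hmono hfree hε y) 0 (ρ a 0)
  exact ⟨n, show ρ a 0 ≤ ρ (ε ^ n) 0 by rwa [map_pow, Equiv.Perm.coe_pow]⟩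
end
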